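/- Gårding–Maclaurin inequalities on the cone: let n ≥ 1 and 1 ≤ k ≤ n, and let λ ∈ Γ_k. Then H₁(λ) ≥ H₂(λ)^{1/2} ≥ ⋯ ≥ H_{k−1}(λ)^{1/(k−1)} ≥ H_k(λ)^{1/k} > 0, i.e., for every 1 ≤ j ≤ k−1 one has H_j(λ)^{1/j} ≥ H_{j+1}(λ)^{1/(j+1)}, and H_k(λ) > 0. -/

import Mathlib

/-- The `k`-th elementary symmetric function of `l = (l 0, …, l (n-1)) ∈ ℝⁿ`. -/
noncomputable def esymm (n k : ℕ) (l : Fin n → ℝ) : ℝ :=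
  ∑ s ∈ Finset.powersetCard k (Finset.univ : Finset (Fin n)), ∏ i ∈ s, l i

/-- The normalized `k`-th mean curvature function `H_k(λ) = σ_k(λ) / C(n,k)`. -/
noncomputable def meanH (n k : ℕ) (l : Fin n → ℝ) : ℝ :=
  esymm n k l / (n.choose k : ℝ)

/-- The Gårding cone `Γ_k ⊆ ℝⁿ`: the connected component of `{λ : σ_k(λ) > 0}`
containing the vector `(1,…,1)`. -/
noncomputable def gardingCone (n k : ℕ) : Set (Fin n → ℝ) :=
  connectedComponentIn {l : Fin n → ℝ | 0 < esymm n k l} (fun _ => 1)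

/-!
By Rolle's theorem the roots of the derivative of `∏ (X - μᵢ)` are again real, and comparing
coefficients shows that they have the same normalized means `H_e` as `μ` for `e < n`. Iterating,
any statement about `H_0, …, H_k` of `n` real numbers reduces to `k` real numbers.

For Newton's inequality `H_j H_{j+2} ≤ H_{j+1}²` this leaves `j + 2` numbers. If one of them
vanishes then `H_{j+2} = 0`; otherwise passing to the reciprocals turns `H_i` into
`H_{j+2-i} / H_{j+2}`, which reduces to `j = 0`, and then to two numbers, where it is AM-GM.
Since `H_0 = 1`, Newton's inequalities give the Maclaurin chain as soon as `H_1, …, H_k > 0`.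

On `{σ_k > 0}` the open set `{H_1, …, H_k > 0}` is relatively closed, so it contains the
component `Γ_k`: if `H_1, …, H_k ≥ 0` and `H_k > 0`, reduce to `k` numbers `μ`; then
`∏ (X + μᵢ)` has nonnegative coefficients and positive constant term, so all `μᵢ > 0`.
-/

open Polynomial

theorem pow_le_pow_succ_of_mul_le_sq {a : ℕ → ℝ} {k : ℕ} (h0 : a 0 = 1)
    (hpos : ∀ i ≤ k, 0 < a i)
    (hnewton : ∀ i, i + 2 ≤ k → a i * a (i + 2) ≤ a (i + 1) ^ 2) :
    ∀ j, j + 1 ≤ k → a (j + 1) ^ j ≤ a j ^ (j + 1)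
  | 0, _ => by simp [h0]
  | j + 1, hj => by
    have ih := pow_le_pow_succ_of_mul_le_sq h0 hpos hnewton j (by omega)
    refine le_of_mul_le_mul_right ?_ (pow_pos (hpos (j + 1) (by omega)) j)
    calc a (j + 2) ^ (j + 1) * a (j + 1) ^ j ≤ a (j + 2) ^ (j + 1) * a j ^ (j + 1) :=
          mul_le_mul_of_nonneg_left ih (pow_nonneg (hpos _ hj).le _)
      _ = (a j * a (j + 2)) ^ (j + 1) := by ring
      _ ≤ (a (j + 1) ^ 2) ^ (j + 1) := by
          gcongr
          · exact mul_nonneg (hpos _ (by omega)).le (hpos _ hj).le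
          · exact hnewton j hj
      _ = a (j + 1) ^ (j + 1 + 1) * a (j + 1) ^ j := by ring

lemma rpow_one_div_succ_le_rpow_one_div {a b : ℝ} {j : ℕ} (hj : j ≠ 0) (ha : 0 ≤ a)
    (hb : 0 ≤ b) (h : b ^ j ≤ a ^ (j + 1)) :
    b ^ ((1 : ℝ) / (j + 1)) ≤ a ^ ((1 : ℝ) / j) := by
  calc b ^ ((1 : ℝ) / (j + 1)) = (b ^ j) ^ ((1 : ℝ) / (j * (j + 1))) := by
        rw [← Real.rpow_natCast, ← Real.rpow_mul hb]
        field_simp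
    _ ≤ (a ^ (j + 1)) ^ ((1 : ℝ) / (j * (j + 1))) :=
        Real.rpow_le_rpow (by positivity) h (by positivity)
    _ = a ^ ((1 : ℝ) / j) := by
        rw [← Real.rpow_natCast, ← Real.rpow_mul ha]
        push_cast
        field_simp

lemma Polynomial.Splits.derivative {p : ℝ[X]} (hp : p.Splits) : p.derivative.Splits := by
  rw [splits_iff_card_roots] at hp ⊢
  have := card_roots_le_derivative p
  have := card_roots' p.derivative
  rw [natDegree_derivative] at this ⊢
  omega

namespace Multiset

section CommSemiring

variable {R : Type*} [CommSemiring R]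

@[simp]
lemma esymm_zero (s : Multiset R) : s.esymm 0 = 1 := by
  simp [esymm, powersetCard_zero_left]

lemma esymm_card (s : Multiset R) : s.esymm (card s) = s.prod := by
  simp [esymm, powersetCard_self]

lemma esymm_eq_zero_of_card_lt {s : Multiset R} {k : ℕ} (h : card s < k) : s.esymm k = 0 := by
  simp [esymm, powersetCard_eq_empty _ h]

lemma esymm_cons_succ (a : R) (s : Multiset R) (k : ℕ) :
    (a ::ₘ s).esymm (k + 1) = s.esymm (k + 1) + a * s.esymm k := by
  simp [esymm, powersetCard_cons, map_map, sum_map_mul_left]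

lemma esymm_pos [PartialOrder R] [IsStrictOrderedRing R] {s : Multiset R} (hs : ∀ a ∈ s, 0 < a)
    {k : ℕ} (hk : k ≤ card s) : 0 < s.esymm k := by
  have hne : s.powersetCard k ≠ 0 :=
    card_pos.mp (by rw [card_powersetCard]; exact Nat.choose_pos hk)
  simpa [esymm] using sum_lt_sum_of_nonempty hne (f := fun _ => (0 : R)) (g := prod)
    fun t ht => prod_pos fun a ha => hs a (mem_of_le (mem_powersetCard.mp ht).1 ha)

end CommSemiring

lemma esymm_eq_prod_mul_esymm_inv {K : Type*} [Field K] (s : Multiset K) (hs : ∀ a ∈ s, a ≠ 0)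
    {i j : ℕ} (hij : i + j = card s) : s.esymm j = s.prod * (s.map (·⁻¹)).esymm i := by
  induction s using Multiset.induction_on generalizing i j with
  | empty => simp_all
  | cons a s ih =>
    have ha : a ≠ 0 := hs a (mem_cons_self a s)
    have hs' : ∀ b ∈ s, b ≠ 0 := fun b hb => hs b (mem_cons_of_mem hb)
    rw [card_cons] at hij
    rcases i with _ | i
    · rw [esymm_zero, mul_one, ← esymm_card, card_cons, ← hij, zero_add]
    rcases j with _ | j
    · obtain rfl : i = card s := by omega
      have h := ih hs' (add_zero (card s))
      rw [esymm_zero] at h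
      rw [esymm_zero, map_cons, prod_cons, esymm_cons_succ, esymm_eq_zero_of_card_lt (by simp),
        zero_add, mul_mul_mul_comm, mul_inv_cancel₀ ha, one_mul, h]
    rw [map_cons, esymm_cons_succ, esymm_cons_succ, prod_cons,
      ih hs' (by omega : i + (j + 1) = card s), ih hs' (by omega : (i + 1) + j = card s)]
    field_simp
    ring

lemma pos_of_esymm_nonneg {s : Multiset ℝ} (hs : ∀ k ≤ card s, 0 ≤ s.esymm k)
    (hprod : 0 < s.prod) : ∀ a ∈ s, 0 < a := by
  intro a ha
  by_contra! hle
  have hx : 0 < -a := by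
    have hne : a ≠ 0 := fun h => hprod.ne' (prod_eq_zero (h ▸ ha))
    simpa using lt_of_le_of_ne hle hne
  have hzero : ((s.map fun b => X + C b).prod).eval (-a) = 0 := by
    rw [eval_multiset_prod, Multiset.map_map]
    exact prod_eq_zero (mem_map.mpr ⟨a, ha, by simp⟩)
  rw [prod_X_add_C_eq_sum_esymm, eval_finsetSum] at hzero
  refine hzero.not_gt (Finset.sum_pos' (fun j hj => ?_) ⟨card s, by simp, ?_⟩)
  · rw [eval_C_mul, eval_X_pow]
    exact mul_nonneg (hs j (Nat.lt_succ_iff.mp (Finset.mem_range.mp hj))) (pow_nonneg hx.le _)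
  · simpa [esymm_card] using hprod

noncomputable def derivativeRoots (s : Multiset ℝ) : Multiset ℝ :=
  (derivative (s.map fun a => X - C a).prod).roots

lemma splits_derivative_prod_X_sub_C (s : Multiset ℝ) :
    (derivative (s.map fun a => X - C a).prod).Splits :=
  Splits.derivative <| splits_iff_card_roots.mpr <| by
    rw [roots_multiset_prod_X_sub_C, natDegree_multiset_prod_X_sub_C_eq_card]

lemma card_derivativeRoots (s : Multiset ℝ) : card s.derivativeRoots = card s - 1 := by
  rw [derivativeRoots, splits_iff_card_roots.mp (splits_derivative_prod_X_sub_C s),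
    natDegree_derivative, natDegree_multiset_prod_X_sub_C_eq_card]

lemma card_mul_esymm_derivativeRoots {s : Multiset ℝ} {e : ℕ} (he : e < card s) :
    (card s : ℝ) * s.derivativeRoots.esymm e = (card s - e : ℕ) * s.esymm e := by
  obtain ⟨m, hm⟩ : ∃ m, card s = m + 1 := ⟨card s - 1, by omega⟩
  have hdeg : (s.map fun a => X - C a).prod.natDegree = m + 1 := by
    rw [natDegree_multiset_prod_X_sub_C_eq_card, hm]
  have hmonic : (s.map fun a => X - C a).prod.Monic :=
    monic_multiset_prod_of_monic _ _ fun a _ => monic_X_sub_C a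
  have h := coeff_derivative (s.map fun a => X - C a).prod (m - e)
  rw [coeff_eq_esymm_roots_of_splits (splits_derivative_prod_X_sub_C s) (by simp [hdeg]),
    prod_X_sub_C_coeff s (by omega)] at h
  simp only [leadingCoeff_derivative, hmonic.leadingCoeff, natDegree_derivative, hdeg, hm] at h
  rw [show m + 1 - 1 - (m - e) = e by omega, show m + 1 - (m - e + 1) = e by omega] at h
  rw [hm, show m + 1 - e = m - e + 1 by omega, derivativeRoots]
  push_cast at h ⊢
  rcases neg_one_pow_eq_or ℝ e with h₁ | h₁ <;> rw [h₁] at h <;> linarith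

noncomputable def esymmMean (s : Multiset ℝ) (k : ℕ) : ℝ :=
  s.esymm k / (card s).choose k

@[simp]
lemma esymmMean_zero (s : Multiset ℝ) : s.esymmMean 0 = 1 := by
  simp [esymmMean]

lemma esymmMean_card (s : Multiset ℝ) : s.esymmMean (card s) = s.prod := by
  simp [esymmMean, esymm_card]

lemma esymmMean_pos_iff {s : Multiset ℝ} {k : ℕ} (hk : k ≤ card s) :
    0 < s.esymmMean k ↔ 0 < s.esymm k :=
  div_pos_iff_of_pos_right (by exact_mod_cast Nat.choose_pos hk)

lemma esymmMean_nonneg_iff {s : Multiset ℝ} {k : ℕ} (hk : k ≤ card s) :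
    0 ≤ s.esymmMean k ↔ 0 ≤ s.esymm k := by
  rw [esymmMean, le_div_iff₀ (by exact_mod_cast Nat.choose_pos hk), zero_mul]

lemma esymmMean_derivativeRoots {s : Multiset ℝ} {e : ℕ} (he : e < card s) :
    s.derivativeRoots.esymmMean e = s.esymmMean e := by
  obtain ⟨m, hm⟩ : ∃ m, card s = m + 1 := ⟨card s - 1, by omega⟩
  have h := card_mul_esymm_derivativeRoots he
  have hchoose : (m.choose e : ℝ) * (m + 1) = (m + 1).choose e * (m + 1 - e : ℕ) := by
    exact_mod_cast Nat.choose_mul_succ_eq m e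
  rw [hm] at h he
  rw [esymmMean, esymmMean, card_derivativeRoots, hm, Nat.add_sub_cancel,
    div_eq_div_iff (by exact_mod_cast (Nat.choose_pos (by omega)).ne')
      (by exact_mod_cast (Nat.choose_pos he.le).ne')]
  apply mul_right_cancel₀ (by positivity : (m + 1 : ℝ) ≠ 0)
  push_cast at h
  linear_combination ((m + 1).choose e : ℝ) * h - s.esymm e * hchoose

lemma exists_card_eq_esymmMean_eq {s : Multiset ℝ} {k : ℕ} (hk : k ≤ card s) :
    ∃ u : Multiset ℝ, card u = k ∧ ∀ e ≤ k, u.esymmMean e = s.esymmMean e := by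
  obtain ⟨d, hd⟩ := Nat.exists_eq_add_of_le hk
  clear hk
  induction d generalizing s with
  | zero => exact ⟨s, hd, fun _ _ => rfl⟩
  | succ d ih =>
    obtain ⟨u, hu, hu_eq⟩ := ih (s := s.derivativeRoots) (by rw [card_derivativeRoots, hd]; rfl)
    exact ⟨u, hu, fun e he => (hu_eq e he).trans (esymmMean_derivativeRoots (by omega))⟩

lemma prod_mul_esymmMean_inv {s : Multiset ℝ} (hs : ∀ a ∈ s, a ≠ 0) {i : ℕ}
    (hi : i ≤ card s) :
    s.prod * (s.map (·⁻¹)).esymmMean i = s.esymmMean (card s - i) := by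
  rw [esymmMean, esymmMean, card_map, Nat.choose_symm hi,
    esymm_eq_prod_mul_esymm_inv s hs (Nat.add_sub_cancel' hi), mul_div_assoc]

lemma esymmMean_two_le_sq {s : Multiset ℝ} (hs : 2 ≤ card s) :
    s.esymmMean 2 ≤ s.esymmMean 1 ^ 2 := by
  obtain ⟨u, hu, hu_eq⟩ := exists_card_eq_esymmMean_eq hs
  obtain ⟨a, b, rfl⟩ := card_eq_two.mp hu
  rw [← hu_eq 1 (by norm_num), ← hu_eq 2 le_rfl]
  simp only [esymmMean, insert_eq_cons, esymm_pair_one, esymm_pair_two, card_cons, card_singleton,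
    Nat.reduceAdd, Nat.choose_self, Nat.choose_succ_self_right, Nat.cast_one, Nat.cast_ofNat,
    div_one]
  nlinarith [sq_nonneg (a - b)]

theorem esymmMean_mul_le_sq {s : Multiset ℝ} {j : ℕ} (hj : j + 2 ≤ card s) :
    s.esymmMean j * s.esymmMean (j + 2) ≤ s.esymmMean (j + 1) ^ 2 := by
  obtain ⟨u, hu, hu_eq⟩ := exists_card_eq_esymmMean_eq hj
  rw [← hu_eq j (by omega), ← hu_eq (j + 1) (by omega), ← hu_eq (j + 2) le_rfl, ← hu,
    esymmMean_card]
  by_cases h0 : ∀ a ∈ u, a ≠ 0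
  · have hinv := esymmMean_two_le_sq (s := u.map (·⁻¹)) (by simp [hu])
    have h₂ : u.prod * (u.map (·⁻¹)).esymmMean 2 = u.esymmMean j := by
      simpa [hu] using prod_mul_esymmMean_inv h0 (i := 2) (by omega)
    have h₁ : u.prod * (u.map (·⁻¹)).esymmMean 1 = u.esymmMean (j + 1) := by
      simpa [hu] using prod_mul_esymmMean_inv h0 (i := 1) (by omega)
    rw [← h₂, ← h₁]
    nlinarith [mul_le_mul_of_nonneg_left hinv (sq_nonneg u.prod)]
  · push Not at h0
    obtain ⟨a, ha, rfl⟩ := h0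
    rw [prod_eq_zero ha, mul_zero]
    positivity

theorem esymmMean_pos_of_nonneg {s : Multiset ℝ} {k : ℕ} (hk : k ≤ card s)
    (hnonneg : ∀ j ≤ k, 0 ≤ s.esymmMean j) (hpos : 0 < s.esymmMean k) :
    ∀ j ≤ k, 0 < s.esymmMean j := by
  obtain ⟨u, hu, hu_eq⟩ := exists_card_eq_esymmMean_eq hk
  have hu_pos : ∀ a ∈ u, 0 < a := by
    refine pos_of_esymm_nonneg (fun j hj => ?_) ?_
    · rw [← esymmMean_nonneg_iff hj, hu_eq j (hu ▸ hj)]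
      exact hnonneg j (hu ▸ hj)
    · rw [← esymmMean_card, hu, hu_eq k le_rfl]
      exact hpos
  intro j hj
  rw [← hu_eq j hj, esymmMean_pos_iff (hu ▸ hj)]
  exact esymm_pos hu_pos (hu ▸ hj)

end Multiset

lemma meanH_eq_esymmMean (n k : ℕ) (l : Fin n → ℝ) :
    meanH n k l = (Finset.univ.val.map l).esymmMean k := by
  rw [meanH, Multiset.esymmMean, esymm, ← Finset.esymm_map_val, Multiset.card_map, Finset.card_val,
    Finset.card_univ, Fintype.card_fin]

lemma meanH_zero (n : ℕ) (l : Fin n → ℝ) : meanH n 0 l = 1 := by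
  simp [meanH_eq_esymmMean]

lemma meanH_pos_iff {n k : ℕ} (hk : k ≤ n) {l : Fin n → ℝ} :
    0 < meanH n k l ↔ 0 < esymm n k l :=
  div_pos_iff_of_pos_right (by exact_mod_cast Nat.choose_pos hk)

lemma meanH_one {n k : ℕ} (hk : k ≤ n) : meanH n k (fun _ => 1) = 1 := by
  have : (n.choose k : ℝ) ≠ 0 := by exact_mod_cast (Nat.choose_pos hk).ne'
  simp [meanH, esymm, this]

lemma continuous_meanH (n k : ℕ) : Continuous (meanH n k) := by
  unfold meanH esymm
  fun_prop

theorem meanH_mul_le_sq {n j : ℕ} (hj : j + 2 ≤ n) (l : Fin n → ℝ) :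
    meanH n j l * meanH n (j + 2) l ≤ meanH n (j + 1) l ^ 2 := by
  simpa only [meanH_eq_esymmMean] using Multiset.esymmMean_mul_le_sq (by simpa using hj)

theorem gardingCone_subset_meanH_pos {n k : ℕ} (hk : k ≤ n) :
    gardingCone n k ⊆ {l | ∀ j ≤ k, 0 < meanH n j l} := by
  set U := {l : Fin n → ℝ | ∀ j ≤ k, 0 < meanH n j l}
  have hU : IsOpen U := by
    have : U = ⋂ j ∈ Set.Iic k, {l | 0 < meanH n j l} := by ext; simp [U]
    rw [this]
    exact (Set.finite_Iic k).isOpen_biInter fun j _ =>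
      isOpen_lt continuous_const (continuous_meanH n j)
  have hone : (fun _ => 1) ∈ U := fun j hj => by rw [meanH_one (hj.trans hk)]; exact one_pos
  refine isPreconnected_connectedComponentIn.subset_of_closure_inter_subset hU
    ⟨_, mem_connectedComponentIn ((meanH_pos_iff hk).mp (hone k le_rfl)), hone⟩ ?_
  rintro l ⟨hclosure, hl⟩
  have hnonneg : ∀ j ≤ k, 0 ≤ meanH n j l := fun j hj =>
    closure_lt_subset_le continuous_const (continuous_meanH n j)
      (closure_mono (fun x (hx : x ∈ U) => hx j hj) hclosure)
  have hpos : 0 < meanH n k l :=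
    (meanH_pos_iff hk).mpr (connectedComponentIn_subset {l | 0 < esymm n k l} _ hl)
  simp only [U, Set.mem_ofPred_eq, meanH_eq_esymmMean] at hnonneg hpos ⊢
  exact Multiset.esymmMean_pos_of_nonneg (by simpa using hk) hnonneg hpos

theorem garding_maclaurin_general (n k : ℕ) (hk : k ≤ n)
    (l : Fin n → ℝ) (hl : l ∈ gardingCone n k) :
    (∀ j, 1 ≤ j → j ≤ k - 1 →
      meanH n (j + 1) l ^ ((1 : ℝ) / (j + 1)) ≤ meanH n j l ^ ((1 : ℝ) / j)) ∧
    0 < meanH n k l := by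
  have hpos : ∀ j ≤ k, 0 < meanH n j l := gardingCone_subset_meanH_pos hk hl
  refine ⟨fun j hj hjk => ?_, hpos k le_rfl⟩
  refine rpow_one_div_succ_le_rpow_one_div (by omega) (hpos j (by omega)).le
    (hpos (j + 1) (by omega)).le ?_
  exact pow_le_pow_succ_of_mul_le_sq (a := fun i => meanH n i l) (meanH_zero n l) hpos
    (fun i hi => meanH_mul_le_sq (by omega) l) j (by omega)

/-- Gårding–Maclaurin inequalities on the cone: for `λ ∈ Γ_k`,
`H₁(λ) ≥ H₂(λ)^{1/2} ≥ ⋯ ≥ H_k(λ)^{1/k} > 0`, i.e. for `1 ≤ j ≤ k-1` one has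
`H_j(λ)^{1/j} ≥ H_{j+1}(λ)^{1/(j+1)}`, and `H_k(λ) > 0`. -/
theorem garding_maclaurin (n k : ℕ) (hn : 1 ≤ n) (hk1 : 1 ≤ k) (hk : k ≤ n)
    (l : Fin n → ℝ) (hl : l ∈ gardingCone n k) :
    (∀ j, 1 ≤ j → j ≤ k - 1 →
      meanH n (j + 1) l ^ ((1 : ℝ) / (j + 1)) ≤ meanH n j l ^ ((1 : ℝ) / j)) ∧
    0 < meanH n k l :=
  garding_maclaurin_general n k hk l hl
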